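/- The elementary group E is maximal among the solvable subgroups of Aut(ℂ²) of derived length 3: the third derived subgroup E⁽³⁾ = [[[E,E],[E,E]], [[E,E],[E,E]]] is trivial, and every subgroup K of Aut(ℂ²) containing E whose third derived subgroup K⁽³⁾ is trivial satisfies K = E. -/

import Mathlib

noncomputable section

open MvPolynomial

/-- A self-map of ℂ² is polynomial if both components are given by polynomials in the
two coordinates. -/
def IsPolyMap (f : ℂ × ℂ → ℂ × ℂ) : Prop :=
  ∃ p q : MvPolynomial (Fin 2) ℂ, ∀ v : ℂ × ℂ,
    f v = (MvPolynomial.eval ![v.1, v.2] p, MvPolynomial.eval ![v.1, v.2] q)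

theorem IsPolyMap.comp {f g : ℂ × ℂ → ℂ × ℂ} (hf : IsPolyMap f) (hg : IsPolyMap g) :
    IsPolyMap (f ∘ g) := by
  obtain ⟨p, q, hpq⟩ := hf
  obtain ⟨p', q', hpq'⟩ := hg
  refine ⟨bind₁ ![p', q'] p, bind₁ ![p', q'] q, fun v => ?_⟩
  have key : ∀ r : MvPolynomial (Fin 2) ℂ,
      MvPolynomial.eval ![v.1, v.2] (bind₁ ![p', q'] r) =
        MvPolynomial.eval
          ![MvPolynomial.eval ![v.1, v.2] p', MvPolynomial.eval ![v.1, v.2] q'] r := by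
    intro r
    have h := MvPolynomial.aeval_bind₁ (S := ℂ) ![v.1, v.2] ![p', q'] r
    have h2 : (fun i => MvPolynomial.aeval ![v.1, v.2] (![p', q'] i)) =
        ![MvPolynomial.eval ![v.1, v.2] p', MvPolynomial.eval ![v.1, v.2] q'] := by
      funext i
      fin_cases i <;> rfl
    rw [h2] at h
    exact h
  calc (f ∘ g) v
      = f (MvPolynomial.eval ![v.1, v.2] p', MvPolynomial.eval ![v.1, v.2] q') := by
        rw [Function.comp_apply, hpq' v]
    _ = (MvPolynomial.eval ![MvPolynomial.eval ![v.1, v.2] p',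
          MvPolynomial.eval ![v.1, v.2] q'] p,
         MvPolynomial.eval ![MvPolynomial.eval ![v.1, v.2] p',
          MvPolynomial.eval ![v.1, v.2] q'] q) := hpq _
    _ = _ := by rw [key p, key q]

/-- The group Aut(ℂ²) of polynomial automorphisms of ℂ², as a subgroup of the
permutation group of ℂ²: the bijections of ℂ² which are polynomial and whose inverse is
polynomial. -/
def AutC2 : Subgroup (Equiv.Perm (ℂ × ℂ)) where
  carrier := { f : Equiv.Perm (ℂ × ℂ) | IsPolyMap f ∧ IsPolyMap f.symm }
  one_mem' := by
    constructor <;>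
      exact ⟨MvPolynomial.X 0, MvPolynomial.X 1, fun v => by simp [Equiv.Perm.one_symm]⟩
  mul_mem' := by
    rintro f g ⟨hf1, hf2⟩ ⟨hg1, hg2⟩
    constructor
    · have h := hf1.comp hg1
      have e : ⇑(f * g) = ⇑f ∘ ⇑g := rfl
      rwa [e]
    · have h := hg2.comp hf2
      have e : ⇑(f * g).symm = ⇑g.symm ∘ ⇑f.symm := rfl
      rwa [e]
  inv_mem' := by
    rintro f ⟨h1, h2⟩
    exact ⟨h2, h1⟩

/-- The elementary subgroup E of Aut(ℂ²): maps (x,y) ↦ (αx + P(y), βy + γ). -/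
def ElemGrp : Subgroup ↥AutC2 where
  carrier := { f | ∃ (α β γ : ℂ) (P : Polynomial ℂ), α ≠ 0 ∧ β ≠ 0 ∧
    ∀ v : ℂ × ℂ, (f : Equiv.Perm (ℂ × ℂ)) v = (α * v.1 + P.eval v.2, β * v.2 + γ) }
  one_mem' := ⟨1, 1, 0, 0, one_ne_zero, one_ne_zero, fun v => by simp⟩
  mul_mem' := by
    rintro f g ⟨α, β, γ, P, hα, hβ, hf⟩ ⟨α', β', γ', P', hα', hβ', hg⟩
    refine ⟨α * α', β * β', β * γ' + γ,
      Polynomial.C α * P' + P.comp (Polynomial.C β' * Polynomial.X + Polynomial.C γ'),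
      mul_ne_zero hα hα', mul_ne_zero hβ hβ', fun v => ?_⟩
    have e : ((f * g : ↥AutC2) : Equiv.Perm (ℂ × ℂ)) v
        = (f : Equiv.Perm (ℂ × ℂ)) ((g : Equiv.Perm (ℂ × ℂ)) v) := rfl
    rw [e, hg v, hf]
    simp only [Polynomial.eval_add, Polynomial.eval_mul, Polynomial.eval_comp,
      Polynomial.eval_C, Polynomial.eval_X, Prod.mk.injEq]
    constructor <;> ring
  inv_mem' := by
    rintro f ⟨α, β, γ, P, hα, hβ, hf⟩
    refine ⟨α⁻¹, β⁻¹, -(β⁻¹ * γ),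
      Polynomial.C (-α⁻¹) * P.comp (Polynomial.C β⁻¹ * Polynomial.X + Polynomial.C (-(β⁻¹ * γ))),
      inv_ne_zero hα, inv_ne_zero hβ, fun v => ?_⟩
    have e : ((f⁻¹ : ↥AutC2) : Equiv.Perm (ℂ × ℂ)) v
        = ((f : Equiv.Perm (ℂ × ℂ))).symm v := rfl
    rw [e, Equiv.symm_apply_eq, hf, Prod.ext_iff]
    simp only [Polynomial.eval_add, Polynomial.eval_mul, Polynomial.eval_comp,
      Polynomial.eval_C, Polynomial.eval_X]
    constructor
    · field_simp; ring
    · field_simp; ring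

/-!
The maps `(x + P(y), y + γ)` form a subgroup `U ⊆ E` and the shears `(x + P(y), y)` an abelian
subgroup `S ⊆ U`; since `[E, E] ⊆ U` and `[U, U] ⊆ S`, the group `E⁽³⁾` is trivial.

Conversely `E⁽²⁾` contains the affine shears `(x + a y + b, y)`. Let `E ⊆ K` with `K⁽³⁾ = 1` and
`f ∈ K`. Conjugating the translation `(x + c, y)` by `f` gives an element of `K⁽²⁾`, which commutes
with all affine shears and is therefore of the form `(x + t(y), y)`. So `f` maps horizontal lines to
horizontal lines and `f(x + c, y) - f(x, y)` does not depend on `x`; being polynomial, `f` is then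
affine on these lines: `f = (A(y) x + B(y), ψ(y))`. Injectivity makes `A` zero-free, hence constant,
and `ψ` has a polynomial inverse, hence is affine, so `f ∈ E`.
-/

-- Closes the section of the definitions above: its `open MvPolynomial` clashes with `Polynomial`.
end

open Polynomial
open scoped commutatorElement

namespace Polynomial

theorem eq_C_of_forall_eval_ne_zero {k : Type*} [Field k] [IsAlgClosed k] {p : k[X]}
    (h : ∀ z, p.eval z ≠ 0) : p = C (p.coeff 0) :=
  eq_C_of_degree_eq_zero <| by
    by_contra hp
    obtain ⟨z, hz⟩ := IsAlgClosed.exists_root p hp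
    exact h z hz

theorem exists_eval_eq_of_comp_eq_X {R : Type*} [CommRing R] [IsDomain R]
    {p q : R[X]} (h : p.comp q = X) : ∃ a ≠ 0, ∃ b, ∀ t, p.eval t = a * t + b := by
  have hdeg : p.natDegree = 1 := by
    have := congrArg natDegree h
    rw [natDegree_comp, natDegree_X] at this
    exact Nat.eq_one_of_mul_eq_one_right this
  refine ⟨p.coeff 1, fun h1 => ?_, p.coeff 0, fun t => ?_⟩
  · rw [← hdeg, coeff_natDegree, leadingCoeff_eq_zero] at h1
    simp [h1] at hdeg
  · rw [eq_X_add_C_of_natDegree_le_one hdeg.le]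
    simp

theorem eval_eq_of_eval_add_one_sub_eval {R : Type*} [CommRing R] [IsDomain R]
    [CharZero R] (p : R[X]) (h : ∀ x, p.eval (x + 1) - p.eval x = p.eval 1 - p.eval 0)
    (x : R) : p.eval x = (p.eval 1 - p.eval 0) * x + p.eval 0 := by
  set r := p - C (p.eval 1 - p.eval 0) * X - C (p.eval 0)
  have hr : ∀ n : ℕ, r.eval (n : R) = 0 := by
    intro n
    induction n with
    | zero => simp [r]
    | succ n ih =>
      simp only [r, eval_sub, eval_mul, eval_C, eval_X, Nat.cast_succ] at ih ⊢
      linear_combination ih + h n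
  have : r = 0 := r.eq_zero_of_infinite_isRoot <|
    (Set.infinite_range_of_injective Nat.cast_injective).mono (by rintro _ ⟨n, rfl⟩; exact hr n)
  have hx := congrArg (eval x) this
  simp only [r, eval_sub, eval_mul, eval_C, eval_X, eval_zero] at hx
  linear_combination hx

end Polynomial

theorem IsPolyMap.exists_polynomial_along_curve {f : ℂ × ℂ → ℂ × ℂ} (hf : IsPolyMap f)
    (a b : ℂ[X]) : ∃ p q : ℂ[X], ∀ t, f (a.eval t, b.eval t) = (p.eval t, q.eval t) := by
  obtain ⟨P, Q, hPQ⟩ := hf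
  have key : ∀ (R : MvPolynomial (Fin 2) ℂ) t,
      (MvPolynomial.aeval ![a, b] R).eval t = MvPolynomial.eval ![a.eval t, b.eval t] R := by
    intro R t
    rw [← coe_aeval_eq_eval, ← AlgHom.comp_apply, MvPolynomial.comp_aeval]
    have hg : (fun i => aeval t (![a, b] i)) = ![aeval t a, aeval t b] := by
      funext i
      fin_cases i <;> rfl
    rw [hg]
    rfl
  exact ⟨_, _, fun t => by rw [hPQ, ← key, ← key]⟩

instance : CoeFun ↥AutC2 (fun _ => ℂ × ℂ → ℂ × ℂ) := ⟨fun f => (f : Equiv.Perm (ℂ × ℂ))⟩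

theorem AutC2.ext {f g : ↥AutC2} (h : ∀ v, f v = g v) : f = g :=
  Subtype.ext (Equiv.ext h)

theorem isPolyMap_elementary (a b c : ℂ) (P : ℂ[X]) :
    IsPolyMap fun v => (a * v.1 + P.eval v.2, b * v.2 + c) := by
  refine ⟨MvPolynomial.C a * MvPolynomial.X 0 + aeval (MvPolynomial.X 1) P,
    MvPolynomial.C b * MvPolynomial.X 1 + MvPolynomial.C c, fun v => ?_⟩
  have hP : MvPolynomial.eval ![v.1, v.2] (aeval (MvPolynomial.X 1) P) = P.eval v.2 := by
    rw [← coe_aeval_eq_eval, ← MvPolynomial.aeval_eq_eval, ← aeval_algHom_apply]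
    simp
  simp [hP]

noncomputable def elemAut (α β : ℂˣ) (γ : ℂ) (P : ℂ[X]) : ↥AutC2 where
  val :=
    { toFun v := (α * v.1 + P.eval v.2, β * v.2 + γ)
      invFun v := (↑α⁻¹ * v.1 + (C (-↑α⁻¹ : ℂ) * P.comp (C (↑β⁻¹ : ℂ) * (X - C γ))).eval v.2,
        ↑β⁻¹ * v.2 + -(↑β⁻¹ * γ))
      left_inv v := by ext <;> simp [eval_comp] <;> field_simp <;> ring
      right_inv v := by ext <;> simp [eval_comp, ← sub_eq_add_neg] <;> field_simp <;> ring }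
  property := ⟨isPolyMap_elementary _ _ _ _,
    isPolyMap_elementary _ _ _ (C (-↑α⁻¹ : ℂ) * P.comp (C (↑β⁻¹ : ℂ) * (X - C γ)))⟩

@[simp]
theorem elemAut_apply (α β : ℂˣ) (γ : ℂ) (P : ℂ[X]) (v : ℂ × ℂ) :
    elemAut α β γ P v = (α * v.1 + P.eval v.2, β * v.2 + γ) := rfl

theorem elemAut_inv (α β : ℂˣ) (γ : ℂ) (P : ℂ[X]) :
    (elemAut α β γ P)⁻¹ =
      elemAut α⁻¹ β⁻¹ (-(↑β⁻¹ * γ)) (C (-↑α⁻¹ : ℂ) * P.comp (C (↑β⁻¹ : ℂ) * (X - C γ))) :=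
  AutC2.ext fun _ => rfl

theorem elemAut_mul (α β α' β' : ℂˣ) (γ γ' : ℂ) (P P' : ℂ[X]) :
    elemAut α β γ P * elemAut α' β' γ' P' =
      elemAut (α * α') (β * β') (β * γ' + γ) (C (α : ℂ) * P' + P.comp (C (β' : ℂ) * X + C γ')) :=
  AutC2.ext fun v => by ext <;> simp <;> ring

theorem mem_elemGrp_iff {f : ↥AutC2} :
    f ∈ ElemGrp ↔ ∃ (α β : ℂˣ) (γ : ℂ) (P : ℂ[X]), f = elemAut α β γ P := by
  constructor
  · rintro ⟨α, β, γ, P, hα, hβ, hf⟩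
    exact ⟨Units.mk0 α hα, Units.mk0 β hβ, γ, P, AutC2.ext hf⟩
  · rintro ⟨α, β, γ, P, rfl⟩
    exact ⟨α, β, γ, P, α.ne_zero, β.ne_zero, fun _ => rfl⟩

theorem elemAut_mem_elemGrp (α β : ℂˣ) (γ : ℂ) (P : ℂ[X]) : elemAut α β γ P ∈ ElemGrp :=
  mem_elemGrp_iff.2 ⟨α, β, γ, P, rfl⟩

theorem exists_commutatorElement_elemAut (α β α' β' : ℂˣ) (γ γ' : ℂ) (P P' : ℂ[X]) :
    ∃ Q, ⁅elemAut α β γ P, elemAut α' β' γ' P'⁆ =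
      elemAut 1 1 ((β - 1) * γ' + (1 - β') * γ) Q := by
  simp only [commutatorElement_def, elemAut_inv, elemAut_mul]
  exact ⟨_, by
    congr 1
    · rw [mul_right_comm α, mul_inv_cancel, one_mul, mul_inv_cancel]
    · rw [mul_right_comm β, mul_inv_cancel, one_mul, mul_inv_cancel]
    · simp only [Units.val_mul, Units.val_inv_eq_inv_val]
      field_simp
      ring⟩

noncomputable def shear (P : ℂ[X]) : ↥AutC2 := elemAut 1 1 0 P

@[simp]
theorem shear_apply (P : ℂ[X]) (v : ℂ × ℂ) : shear P v = (v.1 + P.eval v.2, v.2) := by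
  simp [shear]

noncomputable def shearHom : Multiplicative ℂ[X] →* ↥AutC2 where
  toFun P := shear P.toAdd
  map_one' := AutC2.ext fun v => by simp
  map_mul' P Q := AutC2.ext fun v => by simp; ring

noncomputable def unipotentElemGrp : Subgroup ↥AutC2 where
  carrier := {f | ∃ γ P, f = elemAut 1 1 γ P}
  one_mem' := ⟨0, 0, AutC2.ext fun v => by simp⟩
  mul_mem' := by
    rintro _ _ ⟨γ, P, rfl⟩ ⟨γ', P', rfl⟩
    exact ⟨_, _, by rw [elemAut_mul, mul_one]⟩
  inv_mem' := by
    rintro _ ⟨γ, P, rfl⟩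
    exact ⟨_, _, by rw [elemAut_inv, inv_one]⟩

theorem commutator_elemGrp_le : ⁅ElemGrp, ElemGrp⁆ ≤ unipotentElemGrp := by
  rw [Subgroup.commutator_le]
  intro f hf g hg
  obtain ⟨α, β, γ, P, rfl⟩ := mem_elemGrp_iff.1 hf
  obtain ⟨α', β', γ', P', rfl⟩ := mem_elemGrp_iff.1 hg
  obtain ⟨Q, hQ⟩ := exists_commutatorElement_elemAut α β α' β' γ γ' P P'
  exact ⟨_, Q, hQ⟩

theorem commutator_unipotentElemGrp_le :
    ⁅unipotentElemGrp, unipotentElemGrp⁆ ≤ shearHom.range := by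
  rw [Subgroup.commutator_le]
  rintro _ ⟨γ, P, rfl⟩ _ ⟨γ', P', rfl⟩
  obtain ⟨Q, hQ⟩ := exists_commutatorElement_elemAut 1 1 1 1 γ γ' P P'
  exact ⟨Multiplicative.ofAdd Q, by simp [hQ, shearHom, shear]⟩

theorem derived_three_elemGrp_eq_bot :
    ⁅⁅⁅ElemGrp, ElemGrp⁆, ⁅ElemGrp, ElemGrp⁆⁆, ⁅⁅ElemGrp, ElemGrp⁆, ⁅ElemGrp, ElemGrp⁆⁆⁆ = ⊥ := by
  have h : ⁅⁅ElemGrp, ElemGrp⁆, ⁅ElemGrp, ElemGrp⁆⁆ ≤ shearHom.range :=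
    (Subgroup.commutator_mono commutator_elemGrp_le commutator_elemGrp_le).trans
      commutator_unipotentElemGrp_le
  rw [Subgroup.commutator_eq_bot_iff_le_centralizer]
  exact h.trans ((Subgroup.le_centralizer shearHom.range).trans (Subgroup.centralizer_le h))

namespace Subgroup

theorem le_normalizer_commutator {G : Type*} [Group G] {H₁ H₂ K : Subgroup G}
    (h₁ : K ≤ normalizer (H₁ : Set G)) (h₂ : K ≤ normalizer (H₂ : Set G)) :
    K ≤ normalizer ((⁅H₁, H₂⁆ : Subgroup G) : Set G) := by
  intro g hg
  rw [mem_normalizer_iff_map_conj_eq, map_commutator,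
    mem_normalizer_iff_map_conj_eq.1 (h₁ hg), mem_normalizer_iff_map_conj_eq.1 (h₂ hg)]

end Subgroup

theorem commutatorElement_dilation_shear (P : ℂ[X]) :
    ⁅elemAut (Units.mk0 2 two_ne_zero) 1 0 0, shear P⁆ = shear P :=
  AutC2.ext fun v => by simp [commutatorElement_def, shear, elemAut_inv, ← sub_eq_add_neg]; ring

theorem commutatorElement_dilation_translation (c : ℂ) :
    ⁅elemAut 1 (Units.mk0 2 two_ne_zero) 0 0, elemAut 1 1 c 0⁆ = elemAut 1 1 c 0 :=
  AutC2.ext fun v => by simp [commutatorElement_def, elemAut_inv]; ring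

theorem commutatorElement_shear_translation (P : ℂ[X]) (c : ℂ) :
    ⁅shear P, elemAut 1 1 c 0⁆ = shear (P - P.comp (X - C c)) :=
  AutC2.ext fun v => by simp [commutatorElement_def, shear, elemAut_inv, ← sub_eq_add_neg]; ring

theorem shear_mem_commutator_elemGrp (P : ℂ[X]) : shear P ∈ ⁅ElemGrp, ElemGrp⁆ :=
  commutatorElement_dilation_shear P ▸
    Subgroup.commutator_mem_commutator (elemAut_mem_elemGrp _ _ _ _) (elemAut_mem_elemGrp _ _ _ _)

theorem translation_mem_commutator_elemGrp (c : ℂ) : elemAut 1 1 c 0 ∈ ⁅ElemGrp, ElemGrp⁆ :=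
  commutatorElement_dilation_translation c ▸
    Subgroup.commutator_mem_commutator (elemAut_mem_elemGrp _ _ _ _) (elemAut_mem_elemGrp _ _ _ _)

theorem shear_affine_mem_derived_two (a b : ℂ) :
    shear (C a * X + C b) ∈ ⁅⁅ElemGrp, ElemGrp⁆, ⁅ElemGrp, ElemGrp⁆⁆ := by
  -- `C a * X + C b` is the finite difference of a quadratic polynomial
  have h : (C (a / 2) * X ^ 2 + C (b + a / 2) * X) -
      (C (a / 2) * X ^ 2 + C (b + a / 2) * X).comp (X - C 1) = C a * X + C b :=
    Polynomial.funext fun t => by simp; ring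
  rw [← h, ← commutatorElement_shear_translation]
  exact Subgroup.commutator_mem_commutator (shear_mem_commutator_elemGrp _)
    (translation_mem_commutator_elemGrp _)

theorem eq_of_commute_shears {R : Type*} [AddCommGroup R] {g : R × R → R × R}
    (htrans : ∀ c v, g (v.1 + c, v.2) = ((g v).1 + c, (g v).2))
    (hshear : ∀ v, g (v.1 + v.2, v.2) = ((g v).1 + (g v).2, (g v).2)) (x y : R) :
    g (x, y) = (x + (g (0, y)).1, y) := by
  have hx := htrans x (0, y)
  have hy := (htrans y (0, y)).symm.trans (hshear (0, y))
  simp only [zero_add, Prod.mk.injEq, add_right_inj] at hx hy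
  rw [hx, ← hy.1, add_comm]

theorem exists_translation_conj_shear {K : Subgroup ↥AutC2} (hEK : ElemGrp ≤ K)
    (hK : ⁅⁅⁅K, K⁆, ⁅K, K⁆⁆, ⁅⁅K, K⁆, ⁅K, K⁆⁆⁆ = ⊥) {f : ↥AutC2} (hf : f ∈ K) (c : ℂ) :
    ∃ t : ℂ → ℂ, ∀ z, f (z.1 + c, z.2) = ((f z).1 + t (f z).2, (f z).2) := by
  have hE : ⁅⁅ElemGrp, ElemGrp⁆, ⁅ElemGrp, ElemGrp⁆⁆ ≤ ⁅⁅K, K⁆, ⁅K, K⁆⁆ :=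
    Subgroup.commutator_mono (Subgroup.commutator_mono hEK hEK) (Subgroup.commutator_mono hEK hEK)
  have hN : K ≤ Subgroup.normalizer (⁅⁅K, K⁆, ⁅K, K⁆⁆ : Subgroup ↥AutC2) :=
    have hK₁ := Subgroup.le_normalizer_commutator (Subgroup.le_normalizer (H := K))
      (Subgroup.le_normalizer (H := K))
    Subgroup.le_normalizer_commutator hK₁ hK₁
  set g := f * shear (C c) * f⁻¹ with hg_def
  have hg : g ∈ ⁅⁅K, K⁆, ⁅K, K⁆⁆ :=
    (Subgroup.mem_normalizer_iff.1 (hN hf) _).1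
      (hE (by simpa using shear_affine_mem_derived_two 0 c))
  have hcomm : ∀ a b v, g (shear (C a * X + C b) v) = shear (C a * X + C b) (g v) :=
    fun a b v => (congrArg (fun h : ↥AutC2 => h v)
      (Subgroup.commutator_eq_bot_iff_le_centralizer.1 hK hg _
        (hE (shear_affine_mem_derived_two a b)))).symm
  have hform := eq_of_commute_shears (g := g) (fun b v => by simpa using hcomm 0 b v)
    (fun v => by simpa using hcomm 1 0 v)
  exact ⟨fun y => (g (0, y)).1, fun z => by simpa [hg_def] using hform (f z).1 (f z).2⟩

def IsFibrewiseAffine (f : ℂ × ℂ → ℂ × ℂ) : Prop :=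
  ∃ A B ψ : ℂ → ℂ, ∀ x y, f (x, y) = (A y * x + B y, ψ y)

theorem isFibrewiseAffine_of_mem {K : Subgroup ↥AutC2} (hEK : ElemGrp ≤ K)
    (hK : ⁅⁅⁅K, K⁆, ⁅K, K⁆⁆, ⁅⁅K, K⁆, ⁅K, K⁆⁆⁆ = ⊥) {f : ↥AutC2} (hf : f ∈ K) :
    IsFibrewiseAffine f := by
  have ht := exists_translation_conj_shear hEK hK hf
  have hsnd : ∀ x y, (f (x, y)).2 = (f (0, y)).2 := fun x y => by
    obtain ⟨t, ht⟩ := ht x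
    simpa using congrArg Prod.snd (ht (0, y))
  have hstep : ∀ x y, (f (x + 1, y)).1 - (f (x, y)).1 = (f (1, y)).1 - (f (0, y)).1 := by
    obtain ⟨t, ht⟩ := ht 1
    intro x y
    have h₁ := congrArg Prod.fst (ht (x, y))
    have h₀ := congrArg Prod.fst (ht (0, y))
    simp only [zero_add] at h₀ h₁
    rw [h₁, h₀, hsnd x y]
    ring
  refine ⟨fun y => (f (1, y)).1 - (f (0, y)).1, fun y => (f (0, y)).1, fun y => (f (0, y)).2,
    fun x y => Prod.ext ?_ (hsnd x y)⟩
  obtain ⟨p, _, hp⟩ := f.2.1.exists_polynomial_along_curve X (C y)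
  simp only [eval_X, eval_C] at hp
  have hp' : ∀ x, p.eval x = (f (x, y)).1 := fun x => by rw [hp]
  simpa only [hp'] using p.eval_eq_of_eval_add_one_sub_eval (fun x => by simp only [hp', hstep]) x

theorem mem_elemGrp_of_isFibrewiseAffine {f : ↥AutC2} (hf : IsFibrewiseAffine f) :
    f ∈ ElemGrp := by
  obtain ⟨A, B, ψ, hf⟩ := hf
  obtain ⟨p₀, q₀, h₀⟩ := f.2.1.exists_polynomial_along_curve (C 0) X
  obtain ⟨p₁, _, h₁⟩ := f.2.1.exists_polynomial_along_curve (C 1) X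
  obtain ⟨χ₁, χ, hχ⟩ := f.2.2.exists_polynomial_along_curve (C 0) X
  simp only [eval_C, eval_X] at h₀ h₁ hχ
  have hB : ∀ y, B y = p₀.eval y := fun y => by simpa [hf] using congrArg Prod.fst (h₀ y)
  have hψ : ∀ y, ψ y = q₀.eval y := fun y => by simpa [hf] using congrArg Prod.snd (h₀ y)
  have hA : ∀ y, A y = (p₁ - p₀).eval y := fun y => by
    rw [eval_sub, eq_sub_iff_add_eq, ← hB]
    simpa [hf] using congrArg Prod.fst (h₁ y)
  have hA₀ : ∀ y, A y ≠ 0 := fun y hy => by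
    have := f.1.injective (a₁ := (1, y)) (a₂ := (0, y)) (by simp [hf, hy])
    simp at this
  have hα := eq_C_of_forall_eval_ne_zero fun y => hA y ▸ hA₀ y
  generalize (p₁ - p₀).coeff 0 = α at hα
  have hcomp : q₀.comp χ = X := Polynomial.funext fun t => by
    have h := (f : Equiv.Perm (ℂ × ℂ)).apply_symm_apply (0, t)
    rw [hχ t, hf, hψ] at h
    simpa using congrArg Prod.snd h
  obtain ⟨β, hβ, γ, hq₀⟩ := exists_eval_eq_of_comp_eq_X hcomp
  refine ⟨α, β, γ, p₀, fun h => hA₀ 0 ?_, hβ, fun ⟨x, y⟩ => ?_⟩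
  · rw [hA, hα, h, C_0, eval_zero]
  · rw [hf, hA, hα, hB, hψ, hq₀, eval_C]

/-- (Déserti.)  The elementary group `E` is maximal among the solvable subgroups of
`Aut(ℂ²)` of derived length 3: the third derived subgroup of `E` is trivial, and every
subgroup of `Aut(ℂ²)` containing `E` whose third derived subgroup is trivial equals
`E`. -/
theorem elem_maximal_solvable_length_three :
    ⁅⁅⁅ElemGrp, ElemGrp⁆, ⁅ElemGrp, ElemGrp⁆⁆,
      ⁅⁅ElemGrp, ElemGrp⁆, ⁅ElemGrp, ElemGrp⁆⁆⁆ = (⊥ : Subgroup ↥AutC2) ∧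
    (∀ K : Subgroup ↥AutC2, ElemGrp ≤ K →
      ⁅⁅⁅K, K⁆, ⁅K, K⁆⁆, ⁅⁅K, K⁆, ⁅K, K⁆⁆⁆ = (⊥ : Subgroup ↥AutC2) → K = ElemGrp) :=
  ⟨derived_three_elemGrp_eq_bot, fun _ hEK hK => le_antisymm
    (fun _ hf => mem_elemGrp_of_isFibrewiseAffine (isFibrewiseAffine_of_mem hEK hK hf)) hEK⟩
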